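/- Let m ≥ 2, 1 ≤ k ≤ m−1, and let ρ_f = ((1−f)/(m²−1))(I − P_m^+) + f·P_m^+ be the isotropic state on ℂ^m⊗ℂ^m with fidelity f > k/m. Then for every pure-state decomposition ρ_f = Σ_i p_i |ψ_i⟩⟨ψ_i| (p_i > 0, Σ_i p_i = 1, ψ_i unit vectors), one has Σ_i p_i C(ψ_i) ≥ √(2m/(m−1)) · (f − k/m); consequently C(ρ_f) ≥ √(2m/(m−1)) · (f − k/m). -/

import Mathlib

open scoped BigOperators ComplexConjugate ComplexOrder
open Finset Matrix

noncomputable section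

/-- Tensor product `a⊗b` of two vectors, `(a⊗b)(x,y) = aₓ·b_y`. -/
def tp {m n : ℕ} (a : Fin m → ℂ) (b : Fin n → ℂ) : Fin m × Fin n → ℂ :=
  fun p => a p.1 * b p.2

/-- The standard Hermitian inner product `⟨f,g⟩ = ∑ i, conj (f i) * g i`. -/
def hip {ι : Type} [Fintype ι] (f g : ι → ℂ) : ℂ := ∑ i, conj (f i) * g i

/-- An orthonormal family of vectors. -/
def Onb {m r : ℕ} (a : Fin r → Fin m → ℂ) : Prop :=
  ∀ i j, hip (a i) (a j) = if i = j then 1 else 0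

/-- `IsSchmidt ψ a b μ` : `ψ = ∑ i, √μᵢ aᵢ⊗bᵢ` is a Schmidt decomposition of `ψ`. -/
def IsSchmidt {m : ℕ} (ψ : Fin m × Fin m → ℂ)
    (a b : Fin m → Fin m → ℂ) (μ : Fin m → ℝ) : Prop :=
  Onb a ∧ Onb b ∧ (∀ i, 0 ≤ μ i) ∧ ∑ i, μ i = 1 ∧
  ψ = fun p => ∑ i, (Real.sqrt (μ i) : ℂ) * tp (a i) (b i) p

/-- `A_{kl}^{(W)}(ψ) = Re⟨a_k⊗b_k, W(a_l⊗b_l)⟩`. -/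
def Acoef {m : ℕ} (W : Matrix (Fin m × Fin m) (Fin m × Fin m) ℂ)
    (a b : Fin m → Fin m → ℂ) (k l : Fin m) : ℝ :=
  (hip (tp (a k) (b k)) (W.mulVec (tp (a l) (b l)))).re

/-- Block positivity: `⟨a⊗b, W(a⊗b)⟩ ≥ 0` for all `a`, `b`. -/
def BlockPos {m : ℕ} (W : Matrix (Fin m × Fin m) (Fin m × Fin m) ℂ) : Prop :=
  ∀ a b : Fin m → ℂ, 0 ≤ (hip (tp a b) (W.mulVec (tp a b))).re

/-- The reduced matrix `ρ_A` of a vector `ψ`. -/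
def rhoA {m n : ℕ} (ψ : Fin m × Fin n → ℂ) : Matrix (Fin m) (Fin m) ℂ :=
  Matrix.of fun x y => ∑ z, ψ (x, z) * conj (ψ (y, z))

/-- Concurrence of a pure state: `C(ψ) = √(2(1 − Tr ρ_A²))`. -/
def concP {m n : ℕ} (ψ : Fin m × Fin n → ℂ) : ℝ :=
  Real.sqrt (2 * (1 - (Matrix.trace (rhoA ψ * rhoA ψ)).re))

/-- Convex-roof concurrence of a mixed state. -/
def concM {m n : ℕ} (ρ : Matrix (Fin m × Fin n) (Fin m × Fin n) ℂ) : ℝ :=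
  sInf { c : ℝ | ∃ (N : ℕ) (p : Fin N → ℝ) (ψ : Fin N → (Fin m × Fin n → ℂ)),
    (∀ i, 0 < p i) ∧ ∑ i, p i = 1 ∧ (∀ i, hip (ψ i) (ψ i) = 1) ∧
    ρ = ∑ i, (p i : ℂ) • Matrix.of (fun x y => ψ i x * conj (ψ i y)) ∧
    c = ∑ i, p i * concP (ψ i) }


/-- The maximally entangled vector `ψ_m^+ = (1/√m) ∑ᵢ eᵢ⊗eᵢ`. -/
def maxEnt (m : ℕ) : Fin m × Fin m → ℂ :=
  fun p => if p.1 = p.2 then (((Real.sqrt m)⁻¹ : ℝ) : ℂ) else 0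

/-- The projector `P_m^+ = |ψ_m^+⟩⟨ψ_m^+|` onto the maximally entangled state. -/
def Pplus (m : ℕ) : Matrix (Fin m × Fin m) (Fin m × Fin m) ℂ :=
  Matrix.of fun p q => maxEnt m p * conj (maxEnt m q)

/-- The isotropic state `ρ_f = ((1−f)/(m²−1))(I − P_m^+) + f P_m^+`. -/
def isoState (m : ℕ) (f : ℝ) : Matrix (Fin m × Fin m) (Fin m × Fin m) ℂ :=
  (((1 - f) / ((m : ℝ) ^ 2 - 1) : ℝ) : ℂ) • (1 - Pplus m) + ((f : ℝ) : ℂ) • Pplus m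

/-- The isotropic witnesses `W_k^{iso} = (k/m)·I − P_m^+`. -/
def Wiso (m k : ℕ) : Matrix (Fin m × Fin m) (Fin m × Fin m) ℂ :=
  (((k : ℝ) / (m : ℝ) : ℝ) : ℂ) • 1 - Pplus m

/-!
Write a unit vector `ψ` as a matrix `M`, so that `ρ_A = M Mᴴ` has eigenvalues `λᵢ` (the squared
Schmidt coefficients) and `m |⟨ψ_m^+, ψ⟩|² = |tr M|² ≤ (∑ √λᵢ)²`. Cauchy–Schwarz over the
`m(m-1)` off-diagonal pairs gives `(∑ √λᵢ)² ≤ 1 + √(m(m-1)) √(1 - ∑ λᵢ²)`, that is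
`m F(ψ) - 1 ≤ √(m(m-1)/2) C(ψ)` for the fidelity `F(ψ) = |⟨ψ_m^+, ψ⟩|²`. The left side is affine
in `F`, and `F` averages to `⟨ψ_m^+, ρ_f ψ_m^+⟩ = f` over every decomposition of `ρ_f`, which gives
the bound for `k = 1`, the strongest case. The bound on `C(ρ_f)` follows because
`ρ_f = α I + (f - α) P_m^+` does have a pure-state decomposition.
-/

section Spectral

variable {n 𝕜 : Type*} [Fintype n] [DecidableEq n] [RCLike 𝕜]

lemma Matrix.trace_conjStarAlgAut (u : unitary (Matrix n n 𝕜)) (A : Matrix n n 𝕜) :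
    trace (Unitary.conjStarAlgAut 𝕜 _ u A) = trace A := by
  rw [Unitary.conjStarAlgAut_apply, trace_mul_cycle, Unitary.coe_star_mul_self, one_mul]

lemma Matrix.IsHermitian.trace_mul_self {A : Matrix n n 𝕜} (hA : A.IsHermitian) :
    trace (A * A) = ∑ i, ((hA.eigenvalues i ^ 2 : ℝ) : 𝕜) := by
  rw [← trace_conjStarAlgAut (star hA.eigenvectorUnitary), map_mul,
    hA.conjStarAlgAut_star_eigenvectorUnitary, diagonal_mul_diagonal, trace_diagonal]
  simp [sq]

lemma Matrix.norm_trace_le_sum_sqrt_eigenvalues (M : Matrix n n 𝕜) :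
    ‖trace M‖ ≤ ∑ i, √((isHermitian_mul_conjTranspose_self M).eigenvalues i) := by
  set hH := isHermitian_mul_conjTranspose_self M
  set φ := Unitary.conjStarAlgAut 𝕜 _ (star hH.eigenvectorUnitary)
  set N := φ M
  have hN : N * Nᴴ = diagonal (RCLike.ofReal ∘ hH.eigenvalues) := by
    rw [← hH.conjStarAlgAut_star_eigenvectorUnitary, ← star_eq_conjTranspose, ← map_star,
      ← map_mul, star_eq_conjTranspose]
  -- `N Nᴴ` is diagonal, so `‖N i i‖²` is bounded by the row sum `(N Nᴴ) i i = λᵢ`.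
  have hdiag (i : n) : ‖N i i‖ ≤ √(hH.eigenvalues i) := by
    refine Real.le_sqrt_of_sq_le ?_
    have := congrArg RCLike.re (congrFun (congrFun hN i) i)
    simp only [mul_apply, conjTranspose_apply, RCLike.star_def, RCLike.mul_conj, diagonal_apply_eq,
      Function.comp_apply, RCLike.ofReal_re, ← RCLike.ofReal_pow, ← RCLike.ofReal_sum] at this
    rw [← this]
    exact Finset.single_le_sum (f := fun j => ‖N i j‖ ^ 2) (fun _ _ => sq_nonneg _)
      (Finset.mem_univ i)
  calc ‖trace M‖ = ‖trace N‖ := by rw [trace_conjStarAlgAut]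
    _ ≤ ∑ i, ‖N i i‖ := norm_sum_le _ _
    _ ≤ _ := Finset.sum_le_sum fun i _ => hdiag i

end Spectral

section Scalar

variable {ι : Type*} [Fintype ι] [DecidableEq ι]

lemma Finset.sq_sum_eq_sum_sq_add_sum_offDiag {R : Type*} [CommSemiring R] (s : ι → R) :
    (∑ i, s i) ^ 2 = ∑ i, s i ^ 2 + ∑ q ∈ univ.offDiag, s q.1 * s q.2 := by
  rw [sq, sum_mul_sum, ← sum_product', ← diag_union_offDiag, sum_union (disjoint_diag_offDiag _),
    sum_diag]
  simp only [sq]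

lemma sq_sum_le_one_add_sqrt_mul_sqrt (s : ι → ℝ) (hs : ∑ i, s i ^ 2 = 1) :
    (∑ i, s i) ^ 2 ≤
      1 + √((Fintype.card ι : ℝ) * (Fintype.card ι - 1)) * √(1 - ∑ i, s i ^ 4) := by
  have hcard :
      ((univ : Finset ι).offDiag.card : ℝ) = (Fintype.card ι : ℝ) * (Fintype.card ι - 1) := by
    rw [offDiag_card, card_univ, Nat.cast_sub (Nat.le_mul_self _)]
    push_cast
    ring
  have hoff : ∑ q ∈ univ.offDiag, (s q.1 * s q.2) ^ 2 = 1 - ∑ i, s i ^ 4 := by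
    have := sq_sum_eq_sum_sq_add_sum_offDiag (fun i => s i ^ 2)
    simp only [hs, ← pow_mul] at this
    simp only [mul_pow]
    linarith
  have hcs := sum_mul_sq_le_sq_mul_sq univ.offDiag (fun _ => (1 : ℝ)) (fun q => s q.1 * s q.2)
  simp only [one_mul, one_pow, sum_const, nsmul_eq_mul, mul_one, hcard, hoff] at hcs
  have hT := (le_abs_self _).trans (Real.abs_le_sqrt hcs)
  rw [Real.sqrt_mul' _ (by rw [← hoff]; positivity)] at hT
  have := sq_sum_eq_sum_sq_add_sum_offDiag s
  linarith

end Scalar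

lemma rhoA_eq_mul_conjTranspose {m n : ℕ} (ψ : Fin m × Fin n → ℂ) :
    rhoA ψ = of (Function.curry ψ) * (of (Function.curry ψ))ᴴ := by
  ext x y
  simp [rhoA, mul_apply]

lemma hip_self_eq_trace_rhoA {m n : ℕ} (ψ : Fin m × Fin n → ℂ) :
    hip ψ ψ = trace (rhoA ψ) := by
  simp only [hip, trace, rhoA, diag_apply, of_apply, Fintype.sum_prod_type, mul_comm]

lemma hip_maxEnt {m : ℕ} (ψ : Fin m × Fin m → ℂ) :
    hip (maxEnt m) ψ = (((√m)⁻¹ : ℝ) : ℂ) * trace (of (Function.curry ψ)) := by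
  simp [hip, maxEnt, trace, Fintype.sum_prod_type, mul_sum, apply_ite, ite_mul]

lemma mul_norm_hip_maxEnt_sq {m : ℕ} (ψ : Fin m × Fin m → ℂ) :
    (m : ℝ) * ‖hip (maxEnt m) ψ‖ ^ 2 = ‖trace (of (Function.curry ψ))‖ ^ 2 := by
  rcases Nat.eq_zero_or_pos m with rfl | hm
  · simp [trace]
  rw [hip_maxEnt, norm_mul, mul_pow, Complex.norm_real, Real.norm_eq_abs, sq_abs, inv_pow,
    Real.sq_sqrt (Nat.cast_nonneg m), ← mul_assoc, mul_inv_cancel₀ (by positivity), one_mul]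

lemma mul_norm_hip_maxEnt_sq_sub_one_le {m : ℕ} (ψ : Fin m × Fin m → ℂ) (hψ : hip ψ ψ = 1) :
    (m : ℝ) * ‖hip (maxEnt m) ψ‖ ^ 2 - 1 ≤ √((m : ℝ) * ((m : ℝ) - 1) / 2) * concP ψ := by
  set M := of (Function.curry ψ)
  rw [hip_self_eq_trace_rhoA, rhoA_eq_mul_conjTranspose] at hψ
  rw [concP, rhoA_eq_mul_conjTranspose, mul_norm_hip_maxEnt_sq]
  set hH := isHermitian_mul_conjTranspose_self M
  set s : Fin m → ℝ := fun i => √(hH.eigenvalues i)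
  have hs2 : ∑ i, s i ^ 2 = 1 := by
    have h := hH.trace_eq_sum_eigenvalues
    rw [hψ] at h
    have h1 : ∑ i, hH.eigenvalues i = 1 := by simpa using congrArg Complex.re h.symm
    rw [← h1]
    exact sum_congr rfl fun i _ => Real.sq_sqrt (eigenvalues_self_mul_conjTranspose_nonneg M i)
  have hs4 : (trace (M * Mᴴ * (M * Mᴴ))).re = ∑ i, s i ^ 4 := by
    rw [hH.trace_mul_self]
    simp only [s, show (4 : ℕ) = 2 * 2 from rfl, pow_mul,
      Real.sq_sqrt (eigenvalues_self_mul_conjTranspose_nonneg M _)]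
    norm_cast
  have htrace : ‖trace M‖ ^ 2 ≤ (∑ i, s i) ^ 2 := by
    gcongr
    exact norm_trace_le_sum_sqrt_eigenvalues M
  have hschmidt := sq_sum_le_one_add_sqrt_mul_sqrt s hs2
  rw [Fintype.card_fin] at hschmidt
  rw [hs4, Real.sqrt_div' _ zero_le_two, Real.sqrt_mul zero_le_two, div_mul_eq_mul_div,
    mul_left_comm, mul_div_cancel_left₀ _ (by positivity)]
  linarith

lemma hip_eq_dotProduct {ι : Type} [Fintype ι] (v w : ι → ℂ) : hip v w = star v ⬝ᵥ w := rfl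

lemma hip_mulVec_sum_outer {ι κ : Type} [Fintype ι] [Fintype κ] (v : ι → ℂ) (p : κ → ℝ)
    (ψ : κ → ι → ℂ) :
    hip v ((∑ i, (p i : ℂ) • of (fun x y => ψ i x * conj (ψ i y))) *ᵥ v) =
      ((∑ i, p i * ‖hip v (ψ i)‖ ^ 2 : ℝ) : ℂ) := by
  have houter (i : κ) : of (fun x y => ψ i x * conj (ψ i y)) = vecMulVec (ψ i) (star (ψ i)) := rfl
  simp only [houter, sum_mulVec, smul_mulVec, vecMulVec_mulVec, hip_eq_dotProduct, dotProduct_sum,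
    dotProduct_smul]
  push_cast
  refine sum_congr rfl fun i _ => ?_
  rw [op_smul_eq_mul, star_dotProduct, norm_star, Complex.star_def, Complex.conj_mul',
    smul_eq_mul]

lemma hip_maxEnt_self {m : ℕ} (hm : 0 < m) : hip (maxEnt m) (maxEnt m) = 1 := by
  simp only [hip, maxEnt, Complex.ofReal_inv, apply_ite, map_inv₀, Complex.conj_ofReal, map_zero,
    ite_mul, zero_mul, mul_zero, Fintype.sum_prod_type, sum_ite_eq, mem_univ, ↓reduceIte, sum_const,
    card_univ, Fintype.card_fin, nsmul_eq_mul]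
  rw [← mul_inv, ← Complex.ofReal_mul, Real.mul_self_sqrt (Nat.cast_nonneg m),
    Complex.ofReal_natCast, mul_inv_cancel₀ (Nat.cast_ne_zero.2 hm.ne')]

lemma Pplus_mulVec_maxEnt {m : ℕ} (hm : 0 < m) : Pplus m *ᵥ maxEnt m = maxEnt m := by
  rw [show Pplus m = vecMulVec (maxEnt m) (star (maxEnt m)) from rfl, vecMulVec_mulVec,
    ← hip_eq_dotProduct, hip_maxEnt_self hm, MulOpposite.op_one, one_smul]

lemma isoState_mulVec_maxEnt {m : ℕ} (hm : 0 < m) (f : ℝ) :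
    isoState m f *ᵥ maxEnt m = (f : ℂ) • maxEnt m := by
  simp [isoState, add_mulVec, smul_mulVec, sub_mulVec, Pplus_mulVec_maxEnt hm]

lemma sum_mul_norm_hip_maxEnt_sq_eq {m : ℕ} (hm : 0 < m) {κ : Type} [Fintype κ] (f : ℝ) (p : κ → ℝ)
    (ψ : κ → Fin m × Fin m → ℂ)
    (hρ : isoState m f = ∑ i, (p i : ℂ) • of (fun x y => ψ i x * conj (ψ i y))) :
    ∑ i, p i * ‖hip (maxEnt m) (ψ i)‖ ^ 2 = f := by
  have h := hip_mulVec_sum_outer (maxEnt m) p ψ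
  rw [← hρ, isoState_mulVec_maxEnt hm, hip_eq_dotProduct, dotProduct_smul, ← hip_eq_dotProduct,
    hip_maxEnt_self hm, smul_eq_mul, mul_one] at h
  exact_mod_cast h.symm

lemma exists_fin_decomposition_of_nonneg {m n : ℕ} {κ : Type} [Fintype κ]
    (ρ : Matrix (Fin m × Fin n) (Fin m × Fin n) ℂ) (p : κ → ℝ) (ψ : κ → Fin m × Fin n → ℂ)
    (hp : ∀ i, 0 ≤ p i) (hsum : ∑ i, p i = 1) (hψ : ∀ i, hip (ψ i) (ψ i) = 1)
    (hρ : ρ = ∑ i, (p i : ℂ) • of (fun x y => ψ i x * conj (ψ i y))) :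
    ∃ (N : ℕ) (p' : Fin N → ℝ) (ψ' : Fin N → (Fin m × Fin n → ℂ)),
      (∀ i, 0 < p' i) ∧ ∑ i, p' i = 1 ∧ (∀ i, hip (ψ' i) (ψ' i) = 1) ∧
      ρ = ∑ i, (p' i : ℂ) • of (fun x y => ψ' i x * conj (ψ' i y)) := by
  classical
  let e := Fintype.equivFin {i // 0 < p i}
  have hdrop {M : Type} [AddCommMonoid M] (g : κ → M) (hg : ∀ i, p i = 0 → g i = 0) :
      ∑ j, g (e.symm j) = ∑ i, g i := by
    rw [Fintype.sum_equiv e.symm _ (fun s => g s) fun _ => rfl,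
      ← sum_subtype (univ.filter fun i => 0 < p i) (by simp), sum_filter_of_ne]
    intro i _ hgi
    exact (hp i).lt_of_ne' fun h => hgi (hg i h)
  refine ⟨_, fun j => p (e.symm j), fun j => ψ (e.symm j), fun j => (e.symm j).2,
    ?_, fun j => hψ _, ?_⟩
  · rw [hdrop p fun _ => id, hsum]
  · rw [hρ, hdrop (fun i => (p i : ℂ) • of (fun x y => ψ i x * conj (ψ i y)))
      fun i h => by simp [h]]

lemma exists_isoState_decomposition {m : ℕ} (hm : 2 ≤ m) {f : ℝ} (hf1 : f ≤ 1)
    (hf : 1 / (m : ℝ) ^ 2 ≤ f) :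
    ∃ (N : ℕ) (p : Fin N → ℝ) (ψ : Fin N → (Fin m × Fin m → ℂ)),
      (∀ i, 0 < p i) ∧ ∑ i, p i = 1 ∧ (∀ i, hip (ψ i) (ψ i) = 1) ∧
      isoState m f = ∑ i, (p i : ℂ) • of (fun x y => ψ i x * conj (ψ i y)) := by
  set α := (1 - f) / ((m : ℝ) ^ 2 - 1)
  have hm2 : (1 : ℝ) < (m : ℝ) ^ 2 := by
    have : (2 : ℝ) ≤ m := by exact_mod_cast hm
    nlinarith
  have hα : 0 ≤ α := div_nonneg (by linarith) (by linarith)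
  have hfα : 0 ≤ f - α := by
    rw [sub_nonneg, div_le_iff₀ (by linarith)]
    rw [div_le_iff₀ (by linarith)] at hf
    linarith
  refine exists_fin_decomposition_of_nonneg _ (Option.elim · (f - α) fun _ => α)
    (Option.elim · (maxEnt m) fun r => Pi.single r 1) (fun i => ?_) ?_ (fun i => ?_) ?_
  · cases i <;> assumption
  · simp only [Fintype.sum_option, Option.elim, sum_const, card_univ, Fintype.card_prod,
      Fintype.card_fin, nsmul_eq_mul]
    have hα_mul : α * ((m : ℝ) ^ 2 - 1) = 1 - f := div_mul_cancel₀ _ (by linarith)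
    rw [Nat.cast_mul, ← sq]
    linarith
  · cases i with
    | none => exact hip_maxEnt_self (by omega)
    | some r => simp [hip, Pi.single_apply]
  · have hid : ∑ r : Fin m × Fin m, of (fun x y => (Pi.single r 1 : Fin m × Fin m → ℂ) x *
        conj ((Pi.single r 1 : Fin m × Fin m → ℂ) y)) = 1 := by
      ext x y
      simp [Matrix.sum_apply, Pi.single_apply, one_apply]
    rw [Fintype.sum_option]
    simp only [Option.elim]
    rw [← smul_sum, hid, isoState, show (((1 - f) / ((m : ℝ) ^ 2 - 1) : ℝ) : ℂ) = α from rfl,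
      show Pplus m = of fun x y => maxEnt m x * conj (maxEnt m y) from rfl, Complex.ofReal_sub]
    module

lemma mul_sub_one_le_sqrt_mul_sum_mul_concP {m : ℕ} (hm : 0 < m) {κ : Type} [Fintype κ] (f : ℝ)
    (p : κ → ℝ) (ψ : κ → Fin m × Fin m → ℂ) (hp : ∀ i, 0 ≤ p i) (hsum : ∑ i, p i = 1)
    (hψ : ∀ i, hip (ψ i) (ψ i) = 1)
    (hρ : isoState m f = ∑ i, (p i : ℂ) • of (fun x y => ψ i x * conj (ψ i y))) :
    (m : ℝ) * f - 1 ≤ √((m : ℝ) * ((m : ℝ) - 1) / 2) * ∑ i, p i * concP (ψ i) := by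
  calc (m : ℝ) * f - 1 = ∑ i, p i * ((m : ℝ) * ‖hip (maxEnt m) (ψ i)‖ ^ 2 - 1) := by
        simp only [← sum_mul_norm_hip_maxEnt_sq_eq hm f p ψ hρ, mul_sub, mul_one, sum_sub_distrib,
          hsum, mul_sum, mul_left_comm]
    _ ≤ ∑ i, p i * (√((m : ℝ) * ((m : ℝ) - 1) / 2) * concP (ψ i)) := sum_le_sum fun i _ =>
        mul_le_mul_of_nonneg_left (mul_norm_hip_maxEnt_sq_sub_one_le (ψ i) (hψ i)) (hp i)
    _ = _ := by simp only [mul_sum, mul_left_comm]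

lemma sqrt_two_mul_div_sub_one_mul_sub_le {m k f X : ℝ} (hm : 1 < m) (hk : 1 ≤ k)
    (h : m * f - 1 ≤ √(m * (m - 1) / 2) * X) :
    √(2 * m / (m - 1)) * (f - k / m) ≤ X := by
  have hm0 : 0 < m := by linarith
  have hprod : √(2 * m / (m - 1)) * √(m * (m - 1) / 2) = m := by
    rw [← Real.sqrt_mul (by positivity), show 2 * m / (m - 1) * (m * (m - 1) / 2) = m ^ 2 by
      field_simp [(by linarith : m - 1 ≠ 0)], Real.sqrt_sq hm0.le]
  calc √(2 * m / (m - 1)) * (f - k / m)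
      ≤ √(2 * m / (m - 1)) * ((m * f - 1) / m) := by
        gcongr
        rw [le_div_iff₀ hm0, sub_mul, div_mul_cancel₀ _ hm0.ne']
        linarith
    _ ≤ √(2 * m / (m - 1)) * (√(m * (m - 1) / 2) * X / m) := by gcongr
    _ = X := by rw [mul_div_assoc', ← mul_assoc, hprod, mul_div_cancel_left₀ _ hm0.ne']

lemma sqrt_mul_sub_le_sum_mul_concP {m k : ℕ} (hm : 2 ≤ m) (hk : 1 ≤ k) {κ : Type} [Fintype κ]
    (f : ℝ) (p : κ → ℝ) (ψ : κ → Fin m × Fin m → ℂ) (hp : ∀ i, 0 ≤ p i) (hsum : ∑ i, p i = 1)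
    (hψ : ∀ i, hip (ψ i) (ψ i) = 1)
    (hρ : isoState m f = ∑ i, (p i : ℂ) • of (fun x y => ψ i x * conj (ψ i y))) :
    √(2 * (m : ℝ) / ((m : ℝ) - 1)) * (f - (k : ℝ) / (m : ℝ)) ≤ ∑ i, p i * concP (ψ i) :=
  sqrt_two_mul_div_sub_one_mul_sub_le (by exact_mod_cast hm) (by exact_mod_cast hk)
    (mul_sub_one_le_sqrt_mul_sum_mul_concP (by omega) f p ψ hp hsum hψ hρ)

theorem stmt14_general {m k : ℕ} (hm : 2 ≤ m) (hk1 : 1 ≤ k)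
    (f : ℝ) (hf1 : f ≤ 1) (hf : (k : ℝ) / (m : ℝ) < f) :
    (∀ (N : ℕ) (p : Fin N → ℝ) (ψ : Fin N → (Fin m × Fin m → ℂ)),
      (∀ i, 0 < p i) → ∑ i, p i = 1 → (∀ i, hip (ψ i) (ψ i) = 1) →
      isoState m f = ∑ i, (p i : ℂ) • Matrix.of (fun x y => ψ i x * conj (ψ i y)) →
      Real.sqrt (2 * (m : ℝ) / ((m : ℝ) - 1)) * (f - (k : ℝ) / (m : ℝ))
        ≤ ∑ i, p i * concP (ψ i)) ∧
    Real.sqrt (2 * (m : ℝ) / ((m : ℝ) - 1)) * (f - (k : ℝ) / (m : ℝ))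
      ≤ concM (isoState m f) := by
  have hbound {N : ℕ} (p : Fin N → ℝ) (ψ : Fin N → (Fin m × Fin m → ℂ)) (hp : ∀ i, 0 < p i) :=
    sqrt_mul_sub_le_sum_mul_concP hm hk1 f p ψ fun i => (hp i).le
  have hf' : 1 / (m : ℝ) ^ 2 ≤ f := by
    have hm' : (1 : ℝ) ≤ m := by exact_mod_cast (by omega : 1 ≤ m)
    have hk' : (1 : ℝ) ≤ k := by exact_mod_cast hk1
    refine le_trans ?_ hf.le
    rw [div_le_div_iff₀ (by positivity) (by positivity)]
    nlinarith
  obtain ⟨N, p, ψ, hp, hsum, hψ, hρ⟩ := exists_isoState_decomposition hm hf1 hf'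
  refine ⟨fun N p ψ hp => hbound p ψ hp, le_csInf ⟨_, N, p, ψ, hp, hsum, hψ, hρ, rfl⟩ ?_⟩
  rintro _ ⟨N', p', ψ', hp', hsum', hψ', hρ', rfl⟩
  exact hbound p' ψ' hp' hsum' hψ' hρ'

/-- For the isotropic state `ρ_f` with fidelity `f > k/m` (`m ≥ 2`,
`1 ≤ k ≤ m−1`), every pure-state decomposition satisfies
`∑ᵢ pᵢ C(ψᵢ) ≥ √(2m/(m−1)) (f − k/m)`, and hence
`C(ρ_f) ≥ √(2m/(m−1)) (f − k/m)`. -/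
theorem stmt14 {m k : ℕ} (hm : 2 ≤ m) (hk1 : 1 ≤ k) (hk2 : k ≤ m - 1)
    (f : ℝ) (hf0 : 0 ≤ f) (hf1 : f ≤ 1) (hf : (k : ℝ) / (m : ℝ) < f) :
    (∀ (N : ℕ) (p : Fin N → ℝ) (ψ : Fin N → (Fin m × Fin m → ℂ)),
      (∀ i, 0 < p i) → ∑ i, p i = 1 → (∀ i, hip (ψ i) (ψ i) = 1) →
      isoState m f = ∑ i, (p i : ℂ) • Matrix.of (fun x y => ψ i x * conj (ψ i y)) →
      Real.sqrt (2 * (m : ℝ) / ((m : ℝ) - 1)) * (f - (k : ℝ) / (m : ℝ))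
        ≤ ∑ i, p i * concP (ψ i)) ∧
    Real.sqrt (2 * (m : ℝ) / ((m : ℝ) - 1)) * (f - (k : ℝ) / (m : ℝ))
      ≤ concM (isoState m f) :=
  stmt14_general hm hk1 f hf1 hf
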